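/- Let (a_i), (b_i) be finitely supported sequences of integers satisfying: (a) a_l = 0 for l < μ and l ≥ ν, where q_μ is the lowest nonzero and q_ν the highest nonzero value of q_i := a_i - b_i; (b) a_μ = q_μ > 0; (c) ∑_i q_i = 0; (d) max(q_l, 0) ≤ a_l for all l and a_l < ∑_{i ≤ l} q_i for μ < l < ν. Then for every integer l with μ < l < ν, the strict inequality ∑_{i ≤ l} b_i < ∑_{i < l} a_i holds. -/
import Mathlib


/-- The partial sum `∑_{i ≤ l} c_i` of a finitely supported sequence `c : ℤ → ℤ`. -/
def psum (c : ℤ →₀ ℤ) (l : ℤ) : ℤ := ∑ i ∈ c.support.filter (fun i => i ≤ l), c i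

lemma psum_eq (c : ℤ →₀ ℤ) (s : Finset ℤ) (hs : c.support ⊆ s) (l : ℤ) :
    psum c l = ∑ i ∈ s.filter (fun i => i ≤ l), c i := by
  apply Finset.sum_subset
  · exact Finset.filter_subset_filter _ hs
  · intro x hx hnx
    by_contra h
    have hxs : x ∈ c.support := Finsupp.mem_support_iff.mpr h
    exact hnx (Finset.mem_filter.mpr ⟨hxs, (Finset.mem_filter.mp hx).2⟩)

lemma psum_sub (a b : ℤ →₀ ℤ) (l : ℤ) :
    psum (a - b) l = psum a l - psum b l := by
  have hs : (a - b).support ⊆ a.support ∪ b.support := Finsupp.support_sub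
  rw [psum_eq (a - b) (a.support ∪ b.support) hs l,
    psum_eq a (a.support ∪ b.support) Finset.subset_union_left l,
    psum_eq b (a.support ∪ b.support) Finset.subset_union_right l,
    ← Finset.sum_sub_distrib]
  exact Finset.sum_congr rfl fun i _ => Finsupp.sub_apply a b i

lemma psum_succ (c : ℤ →₀ ℤ) (l : ℤ) :
    psum c l = psum c (l - 1) + c l := by
  have hs : c.support ⊆ insert l c.support := Finset.subset_insert _ _
  rw [psum_eq c (insert l c.support) hs l, psum_eq c (insert l c.support) hs (l - 1)]
  have hfilter : (insert l c.support).filter (fun i => i ≤ l)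
      = insert l ((insert l c.support).filter (fun i => i ≤ l - 1)) := by
    ext x
    simp only [Finset.mem_filter, Finset.mem_insert]
    constructor
    · rintro ⟨hx, hxl⟩
      rcases eq_or_lt_of_le hxl with h | h
      · exact Or.inl h
      · exact Or.inr ⟨hx, by omega⟩
    · rintro (rfl | ⟨hx, hxl⟩)
      · exact ⟨Or.inl rfl, le_refl _⟩
      · exact ⟨hx, by omega⟩
  rw [hfilter, Finset.sum_insert (by simp)]
  ring

/-- If `(a_i)`, `(b_i)` satisfy conditions (a)–(d) (with `q = a - b`, `μ`, `ν` the
extreme indices of `q`, `a_μ = q_μ > 0`, `∑ q_i = 0`, `max(q_l,0) ≤ a_l` everywhere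
and `a_l < ∑_{i ≤ l} q_i` for `μ < l < ν`), then `∑_{i ≤ l} b_i < ∑_{i < l} a_i`
for every `μ < l < ν`. -/
theorem stmt6 (a b : ℤ →₀ ℤ) (μ ν : ℤ)
    (hμ : (a - b) μ ≠ 0 ∧ ∀ i, (a - b) i ≠ 0 → μ ≤ i)
    (hν : (a - b) ν ≠ 0 ∧ ∀ i, (a - b) i ≠ 0 → i ≤ ν)
    (ha1 : ∀ l, l < μ → a l = 0) (ha2 : ∀ l, ν ≤ l → a l = 0)
    (hb : a μ = (a - b) μ ∧ 0 < (a - b) μ)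
    (hc : ∑ i ∈ (a - b).support, (a - b) i = 0)
    (hd1 : ∀ l, max ((a - b) l) 0 ≤ a l)
    (hd2 : ∀ l, μ < l → l < ν → a l < psum (a - b) l) :
    ∀ l, μ < l → l < ν → psum b l < psum a (l - 1) := by
  intro l h1 h2
  have h3 := hd2 l h1 h2
  have h4 := psum_sub a b l
  have h5 := psum_succ a l
  linarith
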